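/- Let H be a complex inner product space, q ∈ ℝ, and let ξ, ξ₁, …, ξₙ ∈ H be such that ⟨ξᵢ, ξ⟩ = 0 = ⟨ξ, ξᵢ⟩ for all 1 ≤ i ≤ n. Then there exists an operator T in the unital algebra of linear endomorphisms of F(H) generated by the field operators s_{ξ₁}, …, s_{ξₙ} such that T(ξ^{⊗k}) = ξ₁⊗…⊗ξₙ⊗ξ^{⊗k} for every k ≥ 0 (with the convention ξ^{⊗0} = Ω, so in particular T(Ω) = ξ₁⊗…⊗ξₙ). -/

import Mathlib

/-!
For a word `L = ψ :: L'` put `T_L = s_ψ T_{L'} - ∑ᵢ qⁱ ⟪ψ, L'ᵢ⟫ T_{L' \ i}`, recursively on the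
length. If every letter of `L` is orthogonal to every letter of a word `R`, then `a_ψ` applied to
`L' ⊗ R` contracts `ψ` only with letters of `L'`, and these contractions are exactly the correction
terms, so `T_L (R) = L ⊗ R`. Taking `R = ξ^{⊗k}` gives the theorem.
-/

noncomputable section

variable {H : Type*} [NormedAddCommGroup H] [InnerProductSpace ℂ H]

/-- The simple tensor `ζ 0 ⊗ ⋯ ⊗ ζ (n-1)` in the algebraic Fock space
`F(H) = ⨁ₙ H^{⊗n}`, realized as the tensor algebra (for `n = 0` this is the
vacuum vector `Ω = 1`). -/
def st (n : ℕ) (ζ : Fin n → H) : TensorAlgebra ℂ H :=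
  (List.ofFn fun i => TensorAlgebra.ι ℂ (ζ i)).prod

/-- Remove the `i`-th entry from a tuple. -/
def removeNth {α : Type*} : {n : ℕ} → Fin n → (Fin n → α) → Fin (n - 1) → α
  | 0, i, _ => i.elim0
  | _ + 1, i, ζ => fun j => ζ (i.succAbove j)

/-- `c` is the family of `q`-creation operators. -/
def IsCreation (c : H → Module.End ℂ (TensorAlgebra ℂ H)) : Prop :=
  ∀ (ξ : H) (n : ℕ) (ζ : Fin n → H), c ξ (st n ζ) = st (n + 1) (Fin.cons ξ ζ)

/-- `a` is the family of `q`-annihilation operators. -/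
def IsAnnihilation (q : ℝ) (a : H → Module.End ℂ (TensorAlgebra ℂ H)) : Prop :=
  ∀ (ξ : H) (n : ℕ) (ζ : Fin n → H),
    a ξ (st n ζ) =
      ∑ i : Fin n, ((q : ℂ) ^ (i : ℕ) * (inner ℂ ξ (ζ i) : ℂ)) • st (n - 1) (removeNth i ζ)


open scoped InnerProductSpace

def listTensor (l : List H) : TensorAlgebra ℂ H :=
  (l.map (TensorAlgebra.ι ℂ)).prod

theorem st_eq_listTensor (n : ℕ) (ζ : Fin n → H) : st n ζ = listTensor (List.ofFn ζ) := by
  rw [st, listTensor, List.map_ofFn]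
  rfl

theorem listTensor_append (l₁ l₂ : List H) :
    listTensor (l₁ ++ l₂) = listTensor l₁ * listTensor l₂ := by
  simp [listTensor]

theorem ofFn_removeNth {α : Type*} {n : ℕ} (i : Fin n) (ζ : Fin n → α) :
    List.ofFn (removeNth i ζ) = (List.ofFn ζ).eraseIdx i := by
  cases n with
  | zero => exact i.elim0
  | succ m =>
    refine List.ext_getElem (by simp [List.length_eraseIdx, i.is_le]) fun j h₁ h₂ => ?_
    simp only [List.getElem_ofFn, List.getElem_eraseIdx]
    split_ifs with h <;> simp [removeNth, Fin.succAbove, Fin.lt_def, h]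

variable {c a : H → Module.End ℂ (TensorAlgebra ℂ H)} {q : ℝ}

theorem IsCreation.apply_listTensor (hc : IsCreation c) (ψ : H) (l : List H) :
    c ψ (listTensor l) = listTensor (ψ :: l) := by
  simpa [st_eq_listTensor, List.ofFn_succ] using hc ψ l.length l.get

theorem IsAnnihilation.apply_listTensor (ha : IsAnnihilation q a) (ψ : H) (l : List H) :
    a ψ (listTensor l) = ∑ i ∈ Finset.range l.length,
      ((q : ℂ) ^ i * ⟪ψ, l.getD i 0⟫_ℂ) • listTensor (l.eraseIdx i) := by
  have h := ha ψ l.length l.get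
  simp only [st_eq_listTensor, List.ofFn_get, ofFn_removeNth] at h
  rw [h, ← Fin.sum_univ_eq_sum_range (fun i => ((q : ℂ) ^ i * ⟪ψ, l.getD i 0⟫_ℂ) • _)]
  simp

theorem IsAnnihilation.apply_listTensor_append (ha : IsAnnihilation q a) (ψ : H) (l R : List H)
    (hR : ∀ r ∈ R, ⟪ψ, r⟫_ℂ = 0) :
    a ψ (listTensor (l ++ R)) = ∑ i ∈ Finset.range l.length,
      ((q : ℂ) ^ i * ⟪ψ, l.getD i 0⟫_ℂ) • (listTensor (l.eraseIdx i) * listTensor R) := by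
  rw [ha.apply_listTensor, List.length_append, Finset.sum_range_add]
  have h_tail : ∀ j ∈ Finset.range R.length,
      ((q : ℂ) ^ (l.length + j) * ⟪ψ, (l ++ R).getD (l.length + j) 0⟫_ℂ) •
        listTensor ((l ++ R).eraseIdx (l.length + j)) = 0 := fun j hj => by
    rw [List.getD_append_right _ _ _ _ (by omega), Nat.add_sub_cancel_left,
      List.getD_eq_getElem _ _ (Finset.mem_range.1 hj), hR _ (List.getElem_mem _), mul_zero,
      zero_smul]
  rw [Finset.sum_eq_zero h_tail, add_zero]
  refine Finset.sum_congr rfl fun i hi => ?_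
  have hi : i < l.length := Finset.mem_range.1 hi
  rw [List.getD_append _ _ _ _ hi, List.eraseIdx_append_of_lt_length hi, listTensor_append]

theorem exists_mem_adjoin_field_apply_listTensor (hc : IsCreation c) (ha : IsAnnihilation q a) :
    ∀ L : List H, ∃ T ∈ Algebra.adjoin ℂ ((fun x => c x + a x) '' {x | x ∈ L}),
      ∀ R : List H, (∀ x ∈ L, ∀ r ∈ R, ⟪x, r⟫_ℂ = 0) →
        T (listTensor R) = listTensor L * listTensor R
  | [] => ⟨1, one_mem _, fun R _ => by simp [listTensor]⟩
  | ψ :: L => by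
    obtain ⟨T, hT, hTR⟩ := exists_mem_adjoin_field_apply_listTensor hc ha L
    choose S hS hSR using
      fun i : ℕ => exists_mem_adjoin_field_apply_listTensor hc ha (L.eraseIdx i)
    have h_sub : ∀ L' : List H, L'.Subset L →
        Algebra.adjoin ℂ ((fun x => c x + a x) '' {x | x ∈ L'}) ≤
          Algebra.adjoin ℂ ((fun x => c x + a x) '' {x | x ∈ ψ :: L}) := fun L' hL' =>
      Algebra.adjoin_mono (Set.image_mono fun x hx => List.mem_cons_of_mem ψ (hL' hx))
    refine ⟨(c ψ + a ψ) * T - ∑ i ∈ Finset.range L.length,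
      ((q : ℂ) ^ i * ⟪ψ, L.getD i 0⟫_ℂ) • S i, ?_, fun R hR => ?_⟩
    · refine sub_mem (mul_mem (Algebra.subset_adjoin ⟨ψ, List.mem_cons_self, rfl⟩) ?_)
        (sum_mem fun i _ => Subalgebra.smul_mem _ ?_ _)
      · exact h_sub L (List.Subset.refl L) hT
      · exact h_sub _ List.eraseIdx_subset (hS i)
    · have hL : ∀ x ∈ L, ∀ r ∈ R, ⟪x, r⟫_ℂ = 0 := fun x hx => hR x (List.mem_cons_of_mem ψ hx)
      simp only [LinearMap.sub_apply, Module.End.mul_apply, LinearMap.add_apply,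
        LinearMap.sum_apply, LinearMap.smul_apply]
      rw [hTR R hL, ← listTensor_append, hc.apply_listTensor,
        ha.apply_listTensor_append ψ L R (hR ψ List.mem_cons_self)]
      have hS_apply : ∀ i, S i (listTensor R) = listTensor (L.eraseIdx i) * listTensor R :=
        fun i => hSR i R fun x hx => hL x (List.eraseIdx_subset hx)
      simp only [hS_apply]
      rw [add_sub_cancel_right, ← List.cons_append, listTensor_append]
termination_by L => L.length
decreasing_by all_goals simp [List.length_eraseIdx_le]

/-- If `⟨ξᵢ, ξ⟩ = 0 = ⟨ξ, ξᵢ⟩` for all `i`, then there is an operator `T` in the unital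
algebra generated by the field operators `s_{ξ₁}, …, s_{ξₙ}` with
`T (ξ^{⊗k}) = ξ₁ ⊗ ⋯ ⊗ ξₙ ⊗ ξ^{⊗k}` for every `k ≥ 0`. -/
theorem stmt8 (q : ℝ) (c a : H → Module.End ℂ (TensorAlgebra ℂ H))
    (hc : IsCreation c) (ha : IsAnnihilation q a)
    (n : ℕ) (ξf : Fin n → H) (ξ : H)
    (horth : ∀ i, (inner ℂ (ξf i) ξ : ℂ) = 0 ∧ (inner ℂ ξ (ξf i) : ℂ) = 0) :
    ∃ T : Module.End ℂ (TensorAlgebra ℂ H),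
      T ∈ Algebra.adjoin ℂ (Set.range fun i => c (ξf i) + a (ξf i)) ∧
      ∀ k : ℕ, T (st k fun _ => ξ) = st n ξf * st k (fun _ => ξ) := by
  obtain ⟨T, hT, hTR⟩ := exists_mem_adjoin_field_apply_listTensor hc ha (List.ofFn ξf)
  have h_gens : (fun x => c x + a x) '' {x | x ∈ List.ofFn ξf} =
      Set.range fun i => c (ξf i) + a (ξf i) := by
    ext; simp [List.mem_ofFn]
  refine ⟨T, h_gens ▸ hT, fun k => ?_⟩
  rw [st_eq_listTensor, st_eq_listTensor, List.ofFn_const]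
  refine hTR _ fun x hx r hr => ?_
  obtain ⟨i, rfl⟩ := List.mem_ofFn.1 hx
  rw [List.eq_of_mem_replicate hr]
  exact (horth i).1
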